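/- Let β̂, β₀ ∈ ℝ^p with ‖β̂‖₁ ≤ ‖β₀‖₁, let a := ‖β̂ − β₀‖_max := maxⱼ |β̂ⱼ − β₀ⱼ| with a > 0, and suppose Σⱼ |β₀ⱼ|^δ ≤ s for some δ ∈ [0,1) and s > 0 (0^0 := 0). Then ‖β̂ − β₀‖₁ ≤ 2(1 + 3^{1−δ} + 2·2^{1−δ}) · s · a^{1−δ}. In particular, ‖β̂ − β₀‖₁ ≤ C s a^{1−δ} for an absolute constant C depending only on δ. -/

import Mathlib

/-!
Write `h = β̂ - β₀`. Coordinatewise, `|hⱼ| ≤ 2 min(|β₀ⱼ|, a) + |β̂ⱼ| - |β₀ⱼ|`, so summing and using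
`‖β̂‖₁ ≤ ‖β₀‖₁` gives `‖h‖₁ ≤ 2 Σⱼ min(|β₀ⱼ|, a)`. Weak sparsity enters through
`min(x, a) ≤ x^δ a^{1-δ}`, whence `‖h‖₁ ≤ 2 s a^{1-δ}`, which is even better than the claimed constant.
-/

noncomputable def l1 {p : ℕ} (x : Fin p → ℝ) : ℝ := ∑ i, |x i|

/-- `wpow x δ` is `x ^ δ` (real power) with the convention `0 ^ 0 = 0`. -/
noncomputable def wpow (x δ : ℝ) : ℝ := if x = 0 then 0 else x ^ δ

lemma wpow_nonneg {x : ℝ} (hx : 0 ≤ x) (δ : ℝ) : 0 ≤ wpow x δ := by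
  unfold wpow
  split_ifs
  exacts [le_rfl, Real.rpow_nonneg hx δ]

lemma min_le_wpow_mul_rpow {x a δ : ℝ} (hx : 0 ≤ x) (ha : 0 ≤ a) (hδ0 : 0 ≤ δ) (hδ1 : δ ≤ 1) :
    min x a ≤ wpow x δ * a ^ (1 - δ) := by
  rcases hx.eq_or_lt with rfl | hx
  · simp [wpow]
  set m := min x a
  have hm : 0 ≤ m := le_min hx.le ha
  calc m = m ^ δ * m ^ (1 - δ) := by
        rw [← Real.rpow_add' hm (by norm_num), add_sub_cancel, Real.rpow_one]
    _ ≤ x ^ δ * a ^ (1 - δ) := by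
        gcongr
        exacts [min_le_left x a, min_le_right x a]
    _ = wpow x δ * a ^ (1 - δ) := by rw [wpow, if_neg hx.ne']

lemma abs_sub_le_two_mul_min_add_abs_sub_abs {x y a : ℝ} (h : |x - y| ≤ a) :
    |x - y| ≤ 2 * min |y| a + (|x| - |y|) := by
  have hxy : |x - y| ≤ |x| + |y| := abs_sub _ _
  have hyx : |y| - |x| ≤ |x - y| := abs_sub_comm x y ▸ abs_sub_abs_le_abs_sub y x
  rcases min_cases |y| a with ⟨hmin, -⟩ | ⟨hmin, -⟩ <;> rw [hmin] <;> linarith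

section Sums

variable {ι : Type*} [Fintype ι]

lemma sum_abs_sub_le_two_mul_sum_min {x y : ι → ℝ} {a : ℝ}
    (hdom : ∑ i, |x i| ≤ ∑ i, |y i|) (ha : ∀ i, |x i - y i| ≤ a) :
    ∑ i, |x i - y i| ≤ 2 * ∑ i, min |y i| a := by
  calc ∑ i, |x i - y i| ≤ ∑ i, (2 * min |y i| a + (|x i| - |y i|)) :=
        Finset.sum_le_sum fun i _ => abs_sub_le_two_mul_min_add_abs_sub_abs (ha i)
    _ = 2 * ∑ i, min |y i| a + (∑ i, |x i| - ∑ i, |y i|) := by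
        rw [Finset.sum_add_distrib, Finset.mul_sum, Finset.sum_sub_distrib]
    _ ≤ 2 * ∑ i, min |y i| a := by linarith

lemma sum_min_abs_le_sum_wpow_mul_rpow (y : ι → ℝ) {a δ : ℝ} (ha : 0 ≤ a) (hδ0 : 0 ≤ δ)
    (hδ1 : δ ≤ 1) : ∑ i, min |y i| a ≤ (∑ i, wpow |y i| δ) * a ^ (1 - δ) := by
  rw [Finset.sum_mul]
  exact Finset.sum_le_sum fun i _ => min_le_wpow_mul_rpow (abs_nonneg _) ha hδ0 hδ1

end Sums

theorem stmt3_general {p : ℕ} (βh β0 : Fin p → ℝ) (δ s a : ℝ)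
    (hδ0 : 0 ≤ δ) (hδ1 : δ < 1)
    (hdom : l1 βh ≤ l1 β0)
    (ha : IsGreatest (Set.range fun j => |βh j - β0 j|) a)
    (hsp : ∑ j, wpow |β0 j| δ ≤ s) :
    l1 (βh - β0) ≤ 2 * (1 + 3 ^ (1 - δ) + 2 * 2 ^ (1 - δ)) * s * a ^ (1 - δ) := by
  have ha0 : 0 ≤ a := by
    obtain ⟨j, rfl⟩ := ha.1
    exact abs_nonneg _
  have hs : 0 ≤ s := (Finset.sum_nonneg fun j _ => wpow_nonneg (abs_nonneg _) δ).trans hsp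
  have hsa : 0 ≤ s * a ^ (1 - δ) := mul_nonneg hs (Real.rpow_nonneg ha0 _)
  have hconst : 0 ≤ (3 : ℝ) ^ (1 - δ) + 2 * 2 ^ (1 - δ) := by positivity
  calc l1 (βh - β0) = ∑ j, |βh j - β0 j| := rfl
    _ ≤ 2 * ∑ j, min |β0 j| a :=
        sum_abs_sub_le_two_mul_sum_min hdom fun j => ha.2 ⟨j, rfl⟩
    _ ≤ 2 * ((∑ j, wpow |β0 j| δ) * a ^ (1 - δ)) := by
        gcongr
        exact sum_min_abs_le_sum_wpow_mul_rpow β0 ha0 hδ0 hδ1.le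
    _ ≤ 2 * (s * a ^ (1 - δ)) := by gcongr
    _ ≤ 2 * (1 + 3 ^ (1 - δ) + 2 * 2 ^ (1 - δ)) * s * a ^ (1 - δ) := by nlinarith

/-- Deterministic core of Theorem 1: from an ℓ¹ domination and a max-norm error
bound, one gets an ℓ¹ error bound under weak sparsity of the truth. Here `a` is
the maximum of `|β̂ⱼ − β₀ⱼ|` (expressed via `IsGreatest`). -/
theorem stmt3 {p : ℕ} (βh β0 : Fin p → ℝ) (δ s a : ℝ)
    (hδ0 : 0 ≤ δ) (hδ1 : δ < 1) (hs : 0 < s)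
    (hdom : l1 βh ≤ l1 β0)
    (ha : IsGreatest (Set.range fun j => |βh j - β0 j|) a) (hapos : 0 < a)
    (hsp : ∑ j, wpow |β0 j| δ ≤ s) :
    l1 (βh - β0) ≤ 2 * (1 + 3 ^ (1 - δ) + 2 * 2 ^ (1 - δ)) * s * a ^ (1 - δ) :=
  stmt3_general βh β0 δ s a hδ0 hδ1 hdom ha hsp
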